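/- Let $(a_m)_{m \ge 1}$ be a sequence of nonnegative reals and suppose that for some constant $\mathfrak{c} \ge 1$ and all $m \ge 1$, $h \ge 1$: $\sum_{m' \ge hm} e^{-2 a_{m'}} \le 2 e^{-2 h a_m / \mathfrak{c}^2}$. Define weights $\lambda_m = e^{-2a_m} / \Sigma$ where $\Sigma = \sum_{k \ge 1} e^{-2a_k}$ (assumed finite and positive). Then for every $m$: (i) $\lambda_m \ge \frac{1}{2} e^{-2 a_m}$, and (ii) for every integer $\mathfrak{h} \ge 2\mathfrak{c}^2$, $\sum_{k > \mathfrak{h} m} \lambda_k \le 2 e^{-a_m}$. -/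

import Mathlib

/-!
Write `w k = exp (-2 a k)` and `Σ = ∑_{k ≥ 1} w k`. The hypothesis at `m = h = 1` gives
`Σ ≤ 2 exp (-2 a₁ / c²) ≤ 2`, which is (i). For (ii), `Σ ≥ w m` and the hypothesis at `h = H`
bound the tail by `2 exp (-2 H a_m / c²) / exp (-2 a_m) ≤ 2 exp (-2 a_m)`, since `H ≥ 2 c²`.
-/

open Real

section NatTails

variable {f : ℕ → ℝ}

theorem antitone_tsum_nat_add (hf : Summable f) (hf0 : 0 ≤ f) :
    Antitone fun n => ∑' k, f (n + k) := by
  refine antitone_nat_of_succ_le fun n => ?_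
  have hfn : Summable fun k => f (n + k) := by
    simpa only [add_comm] using (summable_nat_add_iff n).mpr hf
  rw [hfn.tsum_eq_zero_add]
  simp only [add_assoc, add_comm 1]
  exact le_add_of_nonneg_left (hf0 _)

theorem le_tsum_nat_add (hf : Summable f) (hf0 : 0 ≤ f) {n m : ℕ} (hnm : n ≤ m) :
    f m ≤ ∑' k, f (n + k) := by
  have hfn : Summable fun k => f (n + k) := by
    simpa only [add_comm] using (summable_nat_add_iff n).mpr hf
  simpa only [Nat.add_sub_cancel' hnm] using hfn.le_tsum (m - n) fun j _ => hf0 _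

end NatTails

theorem two_mul_exp_div_exp_le {x c H : ℝ} (hx : 0 ≤ x) (hc : c ≠ 0) (hH : 2 * c ^ 2 ≤ H) :
    2 * exp (-2 * H * x / c ^ 2) / exp (-2 * x) ≤ 2 * exp (-x) := by
  have hc2 : 0 < c ^ 2 := by positivity
  have hexponent : -2 * H * x / c ^ 2 ≤ -4 * x := by
    rw [div_le_iff₀ hc2]
    nlinarith [mul_le_mul_of_nonneg_right hH hx]
  rw [mul_div_assoc, ← exp_sub]
  gcongr
  linarith

theorem generic_prior_mass_general (a : ℕ → ℝ) (c : ℝ) (hc : 1 ≤ c)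
    (ha : ∀ m, 0 ≤ a m)
    (hsum : ∀ m : ℕ, 1 ≤ m → ∀ h : ℕ, 1 ≤ h →
      (∑' k : ℕ, Real.exp (-2 * a (h * m + k)))
        ≤ 2 * Real.exp (-2 * (h : ℝ) * a m / c^2))
    (hS : Summable fun k : ℕ => Real.exp (-2 * a (1 + k))) :
    ∀ m : ℕ, 1 ≤ m →
      ((1:ℝ)/2) * Real.exp (-2 * a m)
          ≤ Real.exp (-2 * a m) / (∑' k : ℕ, Real.exp (-2 * a (1 + k))) ∧
      ∀ H : ℕ, 2 * c^2 ≤ (H : ℝ) →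
        (∑' k : ℕ, Real.exp (-2 * a (H * m + 1 + k))
            / (∑' k : ℕ, Real.exp (-2 * a (1 + k))))
          ≤ 2 * Real.exp (-(a m)) := by
  intro m hm
  set w : ℕ → ℝ := fun k => exp (-2 * a k)
  have hw0 : 0 ≤ w := fun k => (exp_pos _).le
  have hw : Summable w := (summable_nat_add_iff 1).mp (by simpa only [add_comm] using hS)
  have hwm_le : w m ≤ ∑' k, w (1 + k) := le_tsum_nat_add hw hw0 hm
  have hwm_pos : 0 < w m := exp_pos _
  have hnorm_le : ∑' k, w (1 + k) ≤ 2 := by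
    refine (hsum 1 le_rfl 1 le_rfl).trans ?_
    have : -2 * ((1 : ℕ) : ℝ) * a 1 / c ^ 2 ≤ 0 := by
      have := ha 1
      apply div_nonpos_of_nonpos_of_nonneg <;> push_cast <;> nlinarith
    simpa using exp_le_one_iff.mpr this
  refine ⟨?_, fun H hH => ?_⟩
  · rw [one_div_mul_eq_div]
    exact div_le_div_of_nonneg_left hwm_pos.le (hwm_pos.trans_le hwm_le) hnorm_le
  · have hH1 : 1 ≤ H := by exact_mod_cast (by nlinarith : (1 : ℝ) ≤ H)
    rw [tsum_div_const]
    calc (∑' k, w (H * m + 1 + k)) / ∑' k, w (1 + k)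
        ≤ (∑' k, w (H * m + k)) / w m :=
          div_le_div₀ (tsum_nonneg fun k => hw0 _)
            (antitone_tsum_nat_add hw hw0 (Nat.le_succ _)) hwm_pos hwm_le
      _ ≤ 2 * exp (-2 * (H : ℝ) * a m / c ^ 2) / w m := by gcongr; exact hsum m hm H hH1
      _ ≤ 2 * exp (-(a m)) := two_mul_exp_div_exp_le (ha m) (one_pos.trans_le hc).ne' hH

/-- The generic model selection prior `λ_m ∝ exp(-2 a_m)` satisfies the mass
condition (P1). -/
theorem generic_prior_mass (a : ℕ → ℝ) (c : ℝ) (hc : 1 ≤ c)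
    (ha : ∀ m, 0 ≤ a m) (hmono : Monotone a)
    (hsum : ∀ m : ℕ, 1 ≤ m → ∀ h : ℕ, 1 ≤ h →
      (∑' k : ℕ, Real.exp (-2 * a (h * m + k)))
        ≤ 2 * Real.exp (-2 * (h : ℝ) * a m / c^2))
    (hS : Summable fun k : ℕ => Real.exp (-2 * a (1 + k))) :
    ∀ m : ℕ, 1 ≤ m →
      ((1:ℝ)/2) * Real.exp (-2 * a m)
          ≤ Real.exp (-2 * a m) / (∑' k : ℕ, Real.exp (-2 * a (1 + k))) ∧
      ∀ H : ℕ, 2 * c^2 ≤ (H : ℝ) →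
        (∑' k : ℕ, Real.exp (-2 * a (H * m + 1 + k))
            / (∑' k : ℕ, Real.exp (-2 * a (1 + k))))
          ≤ 2 * Real.exp (-(a m)) :=
  generic_prior_mass_general a c hc ha hsum hS
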